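/- Let 1 ≤ a < b be integers with a + b odd, let m be the largest integer with m < ((a+b−1)² + 4b)/(4a) − (a+b−1)/2, and let r be a sufficiently large integer. Let G = K_m + (K_r ∪ K_{(a+b+1)/2}) be the join of K_m with the disjoint union of K_r and K_{(a+b+1)/2}. Then δ(G) = m + (a+b−1)/2 < ((a+b−1)² + 4b)/(4a), and G has no fractional h-factor, where h(u) = a for u ∈ V(K_m) and h(v) = b for all other vertices v. Consequently the minimum-degree bound ((a+b−1)² + 4b)/(4a) in the sufficient condition for all fractional [a,b]-factors is best possible. -/

import Mathlib

open Finset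

/-- The degree of `v` in the induced subgraph `G − S` (on `V(G) \ S`), i.e. the number of
neighbors of `v` in `G` that lie outside `S`. -/
def dOut {V : Type*} [Fintype V] [DecidableEq V] (G : SimpleGraph V) [DecidableRel G.Adj]
    (S : Finset V) (v : V) : ℕ :=
  (G.neighborFinset v \ S).card

/-- `Tset G f S = {v ∈ V(G) − S : d_{G−S}(v) < f v}`. -/
def Tset {V : Type*} [Fintype V] [DecidableEq V] (G : SimpleGraph V) [DecidableRel G.Adj]
    (f : V → ℕ) (S : Finset V) : Finset V :=
  Sᶜ.filter fun v => dOut G S v < f v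

/-- `h` is (the indicator function of) a fractional `(g,f)`-factor of `G`:
`0 ≤ h(e) ≤ 1` on every edge and `g x ≤ Σ_{e ∋ x} h e ≤ f x` for every vertex `x`. -/
def IsFracFactor {V : Type*} [Fintype V] [DecidableEq V] (G : SimpleGraph V)
    [DecidableRel G.Adj] (g f : V → ℕ) (h : Sym2 V → ℝ) : Prop :=
  (∀ e ∈ G.edgeFinset, 0 ≤ h e ∧ h e ≤ 1) ∧
  ∀ x : V, (g x : ℝ) ≤ ∑ e ∈ G.incidenceFinset x, h e ∧
    ∑ e ∈ G.incidenceFinset x, h e ≤ (f x : ℝ)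

/-- `G` has all fractional `(g,f)`-factors: for every `q : V → ℕ` with `g ≤ q ≤ f`
pointwise, `G` has a fractional `q`-factor (a fractional `(q,q)`-factor). -/
def HasAllFracFactors {V : Type*} [Fintype V] [DecidableEq V] (G : SimpleGraph V)
    [DecidableRel G.Adj] (g f : V → ℕ) : Prop :=
  ∀ q : V → ℕ, (∀ v, g v ≤ q v) → (∀ v, q v ≤ f v) → ∃ h, IsFracFactor G q q h

open scoped Classical

/-- The graph `K_m + (K_r ∪ K_s)`: the join of a complete graph on `m` vertices with the
disjoint union of complete graphs on `r` and `s` vertices.  Two distinct vertices are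
adjacent unless one lies in the `K_r` part and the other in the `K_s` part. -/
def joinCliques (m r s : ℕ) : SimpleGraph (Fin m ⊕ (Fin r ⊕ Fin s)) :=
  SimpleGraph.fromRel fun x y =>
    match x, y with
    | Sum.inr (Sum.inl _), Sum.inr (Sum.inr _) => False
    | Sum.inr (Sum.inr _), Sum.inr (Sum.inl _) => False
    | _, _ => True

/-!
Put `n = (a + b + 1) / 2` and let `h'` be a fractional `h`-factor of
`G = K_m + (K_r ∪ K_n)`.  Each vertex of `K_n` needs weight `b` but sees at most `n - 1` of it
inside `K_n`, so at least `n (b - n + 1)` units of weight cross from `K_n` to `K_m`; the `m`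
vertices of `K_m` absorb at most `m a`.  Since `4 n (b - n + 1) = (b + 1)² - a²`, the condition
on `m` says exactly `4 a m < 4 n (b - n + 1)`, a contradiction.
-/

namespace SimpleGraph

variable {V : Type*} [Fintype V] [DecidableEq V] {G : SimpleGraph V} [DecidableRel G.Adj]

theorem incidenceFinset_eq_image_neighborFinset (x : V) :
    G.incidenceFinset x = (G.neighborFinset x).image (s(x, ·)) := by
  ext e
  induction e using Sym2.ind with
  | h u v =>
    simp only [mem_incidenceFinset, incidenceSet, Set.mem_ofPred_eq, mem_edgeSet, Sym2.mem_iff,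
      mem_image, mem_neighborFinset, Sym2.eq_iff]
    grind [adj_comm]

theorem sum_incidenceFinset_eq_sum_neighborFinset {M : Type*} [AddCommMonoid M]
    (h : Sym2 V → M) (x : V) :
    ∑ e ∈ G.incidenceFinset x, h e = ∑ y ∈ G.neighborFinset x, h s(x, y) := by
  rw [incidenceFinset_eq_image_neighborFinset,
    sum_image fun y _ z _ hyz => Sym2.congr_right.mp hyz]

end SimpleGraph

open SimpleGraph

theorem IsFracFactor.sum_le_sum_add_sum_dOut {V : Type*} [Fintype V] [DecidableEq V]
    {G : SimpleGraph V} [DecidableRel G.Adj] {g f : V → ℕ} {h : Sym2 V → ℝ}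
    (hh : IsFracFactor G g f h) (S T : Finset V) :
    ∑ x ∈ T, (g x : ℝ) ≤ ∑ y ∈ S, (f y : ℝ) + ∑ x ∈ T, (dOut G S x : ℝ) := by
  have hbounds : ∀ x y, G.Adj x y → 0 ≤ h s(x, y) ∧ h s(x, y) ≤ 1 := fun x y hxy =>
    hh.1 _ (G.mem_edgeFinset.mpr hxy)
  have hdemand : ∀ x, (g x : ℝ) ≤ ∑ y ∈ G.neighborFinset x ∩ S, h s(x, y) + dOut G S x := by
    intro x
    calc (g x : ℝ) ≤ ∑ e ∈ G.incidenceFinset x, h e := (hh.2 x).1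
      _ = ∑ y ∈ G.neighborFinset x ∩ S, h s(x, y) + ∑ y ∈ G.neighborFinset x \ S, h s(x, y) := by
        rw [sum_incidenceFinset_eq_sum_neighborFinset, sum_inter_add_sum_sdiff]
      _ ≤ _ := by
        grw [sum_le_card_nsmul _ _ 1 fun y hy =>
          (hbounds x y ((G.mem_neighborFinset _ _).mp (mem_sdiff.mp hy).1)).2]
        simp [dOut]
  have hsupply : ∀ y, ∑ x ∈ G.neighborFinset y ∩ T, h s(x, y) ≤ f y := by
    intro y
    calc ∑ x ∈ G.neighborFinset y ∩ T, h s(x, y) ≤ ∑ x ∈ G.neighborFinset y, h s(y, x) := by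
          simp_rw [Sym2.eq_swap (a := _) (b := y)]
          exact sum_le_sum_of_subset_of_nonneg inter_subset_left fun x hx _ =>
            (hbounds y x ((G.mem_neighborFinset _ _).mp hx)).1
      _ = ∑ e ∈ G.incidenceFinset y, h e := (sum_incidenceFinset_eq_sum_neighborFinset h y).symm
      _ ≤ f y := (hh.2 y).2
  calc ∑ x ∈ T, (g x : ℝ)
      ≤ ∑ x ∈ T, ∑ y ∈ G.neighborFinset x ∩ S, h s(x, y) + ∑ x ∈ T, (dOut G S x : ℝ) := by
        rw [← sum_add_distrib]
        exact sum_le_sum fun x _ => hdemand x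
    _ = ∑ y ∈ S, ∑ x ∈ G.neighborFinset y ∩ T, h s(x, y) + ∑ x ∈ T, (dOut G S x : ℝ) := by
        rw [sum_comm' (t' := S) (s' := fun y => G.neighborFinset y ∩ T) fun x y => by
          simp [adj_comm, and_comm, and_left_comm]]
    _ ≤ _ := by grw [sum_le_sum fun y _ => hsupply y]

section joinCliques

variable {m r s : ℕ}

theorem joinCliques_degree_inl (i : Fin m) :
    (joinCliques m r s).degree (.inl i) = m - 1 + (r + s) := by
  rw [← card_neighborFinset_eq_degree, neighborFinset_eq_filter, card_filter,
    Fintype.sum_sum_type, Fintype.sum_sum_type]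
  simp [joinCliques, sum_ite, filter_ne]

theorem joinCliques_degree_inr_inl (j : Fin r) :
    (joinCliques m r s).degree (.inr (.inl j)) = m + (r - 1) := by
  rw [← card_neighborFinset_eq_degree, neighborFinset_eq_filter, card_filter,
    Fintype.sum_sum_type, Fintype.sum_sum_type]
  simp [joinCliques, sum_ite, filter_ne]

theorem joinCliques_neighborFinset_inr_inr (k : Fin s) :
    (joinCliques m r s).neighborFinset (.inr (.inr k)) =
      univ.map .inl ∪ (univ.erase k).map (Function.Embedding.inr.trans .inr) := by
  ext y
  rw [mem_neighborFinset]
  rcases y with i | j | k' <;> simp [joinCliques, eq_comm]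

theorem joinCliques_degree_inr_inr (k : Fin s) :
    (joinCliques m r s).degree (.inr (.inr k)) = m + (s - 1) := by
  rw [← card_neighborFinset_eq_degree, joinCliques_neighborFinset_inr_inr,
    card_union_of_disjoint (by simp [Finset.disjoint_left])]
  simp

theorem joinCliques_dOut_inr_inr (k : Fin s) :
    dOut (joinCliques m r s) (univ.map .inl) (.inr (.inr k)) = s - 1 := by
  rw [dOut, joinCliques_neighborFinset_inr_inr,
    union_sdiff_cancel_left (by simp [Finset.disjoint_left])]
  simp

theorem joinCliques_minDegree (hs : 0 < s) (hsr : s ≤ r) :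
    (joinCliques m r s).minDegree = m + (s - 1) := by
  have : Nonempty (Fin s) := ⟨⟨0, hs⟩⟩
  refine le_antisymm ?_ (le_minDegree_of_forall_le_degree _ _ ?_)
  · exact (minDegree_le_degree _ (.inr (.inr ⟨0, hs⟩))).trans_eq (joinCliques_degree_inr_inr _)
  · rintro (i | j | k)
    · rw [joinCliques_degree_inl]; omega
    · rw [joinCliques_degree_inr_inl]; omega
    · rw [joinCliques_degree_inr_inr]

end joinCliques

theorem mul_add_lt_of_lt_degreeBound {a b m n : ℝ} (ha : 0 < a) (hn : 2 * n = a + b + 1)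
    (hm : m < ((a + b - 1) ^ 2 + 4 * b) / (4 * a) - (a + b - 1) / 2) :
    m * a + n * (n - 1) < n * b := by
  rw [lt_sub_iff_add_lt, lt_div_iff₀ (by positivity)] at hm
  nlinarith

theorem min_degree_bound_sharp_general (a b : ℕ) (ha : 1 ≤ a) (hodd : Odd (a + b))
    (m : ℕ)
    (hm₁ : (m : ℝ) < (((a : ℝ) + b - 1) ^ 2 + 4 * b) / (4 * a) - ((a : ℝ) + b - 1) / 2) :
    ∃ r₀ : ℕ, ∀ r : ℕ, r₀ ≤ r →
      (joinCliques m r ((a + b + 1) / 2)).minDegree = m + (a + b - 1) / 2 ∧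
      ((joinCliques m r ((a + b + 1) / 2)).minDegree : ℝ) <
        (((a : ℝ) + b - 1) ^ 2 + 4 * b) / (4 * a) ∧
      ¬ ∃ h' : Sym2 (Fin m ⊕ (Fin r ⊕ Fin ((a + b + 1) / 2))) → ℝ,
          IsFracFactor (joinCliques m r ((a + b + 1) / 2))
            (Sum.elim (fun _ => a) (fun _ => b)) (Sum.elim (fun _ => a) (fun _ => b)) h' := by
  obtain ⟨t, ht⟩ := hodd
  have htR : (a : ℝ) + b = 2 * t + 1 := by exact_mod_cast ht
  rw [show (a + b + 1) / 2 = t + 1 by omega, show (a + b - 1) / 2 = t by omega]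
  refine ⟨t + 1, fun r hr => ⟨joinCliques_minDegree t.succ_pos hr, ?_, ?_⟩⟩
  · rw [joinCliques_minDegree t.succ_pos hr]
    push_cast
    linarith
  · rintro ⟨h', hh⟩
    have hflow := hh.sum_le_sum_add_sum_dOut (univ.map .inl)
      (univ.map (Function.Embedding.inr.trans .inr))
    simp only [sum_map, Function.Embedding.trans_apply, Function.Embedding.inr_apply,
      Function.Embedding.inl_apply, Sum.elim_inl, Sum.elim_inr, joinCliques_dOut_inr_inr,
      sum_const, card_univ, Fintype.card_fin, nsmul_eq_mul, add_tsub_cancel_right] at hflow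
    have := mul_add_lt_of_lt_degreeBound (n := t + 1) (by exact_mod_cast ha) (by linarith) hm₁
    push_cast at hflow
    linarith

/-- **Sharpness of the minimum-degree bound.** Let `1 ≤ a < b` with `a + b` odd, and let
`m` be the largest integer with `m < ((a+b−1)² + 4b)/(4a) − (a+b−1)/2`.  For all
sufficiently large `r`, the graph `G = K_m + (K_r ∪ K_{(a+b+1)/2})` satisfies
`δ(G) = m + (a+b−1)/2 < ((a+b−1)² + 4b)/(4a)`, and `G` has no fractional `h`-factor,
where `h ≡ a` on `V(K_m)` and `h ≡ b` elsewhere. -/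
theorem min_degree_bound_sharp (a b : ℕ) (ha : 1 ≤ a) (hab : a < b) (hodd : Odd (a + b))
    (m : ℕ)
    (hm₁ : (m : ℝ) < (((a : ℝ) + b - 1) ^ 2 + 4 * b) / (4 * a) - ((a : ℝ) + b - 1) / 2)
    (hm₂ : ∀ k : ℤ,
      (k : ℝ) < (((a : ℝ) + b - 1) ^ 2 + 4 * b) / (4 * a) - ((a : ℝ) + b - 1) / 2 →
        k ≤ (m : ℤ)) :
    ∃ r₀ : ℕ, ∀ r : ℕ, r₀ ≤ r →
      (joinCliques m r ((a + b + 1) / 2)).minDegree = m + (a + b - 1) / 2 ∧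
      ((joinCliques m r ((a + b + 1) / 2)).minDegree : ℝ) <
        (((a : ℝ) + b - 1) ^ 2 + 4 * b) / (4 * a) ∧
      ¬ ∃ h' : Sym2 (Fin m ⊕ (Fin r ⊕ Fin ((a + b + 1) / 2))) → ℝ,
          IsFracFactor (joinCliques m r ((a + b + 1) / 2))
            (Sum.elim (fun _ => a) (fun _ => b)) (Sum.elim (fun _ => a) (fun _ => b)) h' :=
  min_degree_bound_sharp_general a b ha hodd m hm₁
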